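/- Let X and Y be Banach spaces, x ∈ X \ {0}, y ∈ Y \ {0} with ‖x‖ + ‖y‖ = 1. Then (x, y) is a semi SCS point of B_{X ⊕_1 Y} if and only if x/‖x‖ is a semi SCS point of B_X and y/‖y‖ is a semi SCS point of B_Y. -/

import Mathlib

/-!
Backward direction: `(x, y) = ‖x‖ • (x/‖x‖, 0) + ‖y‖ • (0, y/‖y‖)`, semi SCS points form a convex
set, and `(u, 0)` is a semi SCS point of `B_{X ⊕₁ Y}` whenever `u` is one of `B_X`: pulling
norm-one slices of `B_X` back along the first projection gives slices of `B_{X ⊕₁ Y}` whose points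
have second coordinate of norm less than the depth of the slice.

Forward direction: take a convex combination of slices `S(Fᵢ, δᵢ)` of `B_{X ⊕₁ Y}` near `(x, y)`
and fix `(aᵢ, bᵢ) ∈ S(Fᵢ, δᵢ/2)`. For `u` in the slice `S(Fᵢ ∘ inl, δᵢ/2)` of `B_X`, the point
`(‖aᵢ‖ u, bᵢ)` stays in `S(Fᵢ, δᵢ)`, so `∑ λᵢ ‖aᵢ‖ uᵢ` lies near `x`. The second coordinates and
`‖x‖ + ‖y‖ = 1` force `∑ λᵢ ‖aᵢ‖ ≈ ‖x‖`, and renormalising these weights yields slices of `B_X`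
whose combination lies near `x/‖x‖`. The `y` side follows by swapping the factors.
-/

/-- A point `x₀` of the closed unit ball of `Z` is a *semi SCS point* of `B_Z` if for every
`ε > 0` there exist finitely many slices `Sᵢ = {z ∈ B_Z : fᵢ z > ‖fᵢ‖ - δᵢ}` of `B_Z` and convex
weights `λᵢ ≥ 0`, `Σ λᵢ = 1`, such that the convex combination `Σ λᵢ Sᵢ` is contained in
`B(x₀, ε)`. -/
def IsSemiSCSPointOfBall {Z : Type*} [NormedAddCommGroup Z] [NormedSpace ℝ Z] (x : Z) : Prop :=
  ‖x‖ ≤ 1 ∧ ∀ ε > (0 : ℝ), ∃ (n : ℕ) (lam : Fin n → ℝ) (f : Fin n → (Z →L[ℝ] ℝ))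
    (δ : Fin n → ℝ), (∀ i, 0 ≤ lam i) ∧ (∑ i, lam i) = 1 ∧ (∀ i, 0 < δ i) ∧
    ∀ z : Fin n → Z, (∀ i, ‖z i‖ ≤ 1 ∧ f i (z i) > ‖f i‖ - δ i) →
      (∑ i, lam i • z i) ∈ Metric.closedBall x ε

open Metric WithLp

section Slices

variable {Z : Type*} [NormedAddCommGroup Z] [NormedSpace ℝ Z]

/-- The slice `S(f, δ)` of `B_Z`; the condition on `z` in `IsSemiSCSPointOfBall` is
`∀ i, z i ∈ ballSlice (f i) (δ i)` by definition. -/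
def ballSlice (f : Z →L[ℝ] ℝ) (δ : ℝ) : Set Z := {z | ‖z‖ ≤ 1 ∧ f z > ‖f‖ - δ}

lemma ballSlice_nonempty (f : Z →L[ℝ] ℝ) {δ : ℝ} (hδ : 0 < δ) : (ballSlice f δ).Nonempty := by
  obtain ⟨z, hz, hfz⟩ := f.exists_lt_apply_of_lt_opNorm (sub_lt_self ‖f‖ hδ)
  rcases le_total 0 (f z) with h | h
  · rw [Real.norm_of_nonneg h] at hfz
    exact ⟨z, hz.le, hfz⟩
  · rw [Real.norm_of_nonpos h] at hfz
    exact ⟨-z, by rw [norm_neg]; exact hz.le, by rwa [map_neg]⟩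

lemma exists_norm_eq_one_ballSlice_subset [Nontrivial Z] (f : Z →L[ℝ] ℝ) {δ ε : ℝ}
    (hδ : 0 < δ) (hε : 0 < ε) :
    ∃ (g : Z →L[ℝ] ℝ) (δ' : ℝ), ‖g‖ = 1 ∧ 0 < δ' ∧ δ' ≤ ε ∧ ballSlice g δ' ⊆ ballSlice f δ := by
  rcases eq_or_ne f 0 with rfl | hf
  · obtain ⟨g, hg, -⟩ := exists_dual_vector' ℝ (0 : Z)
    exact ⟨g, ε, hg, hε, le_rfl, fun z hz => ⟨hz.1, by simpa using hδ⟩⟩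
  · have hf' : 0 < ‖f‖ := norm_pos_iff.mpr hf
    have hg : ‖‖f‖⁻¹ • f‖ = 1 := by
      rw [norm_smul, norm_inv, norm_norm, inv_mul_cancel₀ hf'.ne']
    refine ⟨‖f‖⁻¹ • f, min (δ / ‖f‖) ε, hg, lt_min (div_pos hδ hf') hε, min_le_right _ _,
      fun z ⟨hz, hfz⟩ => ⟨hz, ?_⟩⟩
    rw [hg, smul_apply, smul_eq_mul] at hfz
    calc f z = ‖f‖ * (‖f‖⁻¹ * f z) := by field_simp
      _ > ‖f‖ * (1 - δ / ‖f‖) := by gcongr; linarith [min_le_left (δ / ‖f‖) ε]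
      _ = ‖f‖ - δ := by field_simp

lemma IsSemiSCSPointOfBall.exists_norm_eq_one [Nontrivial Z] {x : Z}
    (h : IsSemiSCSPointOfBall x) {ε : ℝ} (hε : 0 < ε) :
    ∃ (n : ℕ) (lam : Fin n → ℝ) (f : Fin n → Z →L[ℝ] ℝ) (δ : Fin n → ℝ),
      (∀ i, 0 ≤ lam i) ∧ ∑ i, lam i = 1 ∧ (∀ i, ‖f i‖ = 1 ∧ 0 < δ i ∧ δ i ≤ ε) ∧
      ∀ z : Fin n → Z, (∀ i, z i ∈ ballSlice (f i) (δ i)) → ∑ i, lam i • z i ∈ closedBall x ε := by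
  obtain ⟨n, lam, f, δ, hlam, hsum, hδ, hball⟩ := h.2 ε hε
  choose g δ' hg using fun i => exists_norm_eq_one_ballSlice_subset (f i) (hδ i) hε
  exact ⟨n, lam, g, δ', hlam, hsum, fun i => ⟨(hg i).1, (hg i).2.1, (hg i).2.2.1⟩,
    fun z hz => hball z fun i => (hg i).2.2.2 (hz i)⟩

lemma IsSemiSCSPointOfBall.map {W : Type*} [NormedAddCommGroup W] [NormedSpace ℝ W]
    (T : Z ≃ₗᵢ[ℝ] W) {x : Z} (h : IsSemiSCSPointOfBall x) : IsSemiSCSPointOfBall (T x) := by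
  refine ⟨by rw [T.norm_map]; exact h.1, fun ε hε => ?_⟩
  obtain ⟨n, lam, f, δ, hlam, hsum, hδ, hball⟩ := h.2 ε hε
  refine ⟨n, lam, fun i => (f i).comp (T.symm : W →L[ℝ] Z), δ, hlam, hsum, hδ, fun z hz => ?_⟩
  have hz' (i : Fin n) : T.symm (z i) ∈ ballSlice (f i) (δ i) := by
    obtain ⟨hz₁, hz₂⟩ := hz i
    rw [ContinuousLinearMap.opNorm_comp_linearIsometryEquiv] at hz₂
    exact ⟨by rwa [T.symm.norm_map], hz₂⟩
  have := hball _ hz'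
  rw [mem_closedBall, ← T.dist_map, map_sum] at this
  simpa using this

theorem convex_setOf_isSemiSCSPointOfBall : Convex ℝ {x : Z | IsSemiSCSPointOfBall x} := by
  intro a ha b hb s t hs ht hst
  refine ⟨?_, fun ε hε => ?_⟩
  · simpa using (convex_closedBall (0 : Z) 1) (by simpa using ha.1) (by simpa using hb.1) hs ht hst
  obtain ⟨n, lam, f, δ, hlam, hsum, hδ, hball⟩ := ha.2 ε hε
  obtain ⟨m, mu, g, η, hmu, hmsum, hη, hball'⟩ := hb.2 ε hε
  refine ⟨n + m, Fin.append (s • lam) (t • mu), Fin.append f g, Fin.append δ η,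
    Fin.addCases (by simpa using fun i => mul_nonneg hs (hlam i))
      (by simpa using fun j => mul_nonneg ht (hmu j)), ?_,
    Fin.addCases (by simpa using hδ) (by simpa using hη), fun z hz => ?_⟩
  · simp [Fin.sum_univ_add, ← Finset.mul_sum, hsum, hmsum, hst]
  have hp := hball (fun i => z (Fin.castAdd m i)) fun i => by simpa using hz (Fin.castAdd m i)
  have hq := hball' (fun j => z (Fin.natAdd n j)) fun j => by simpa using hz (Fin.natAdd n j)
  rw [mem_closedBall] at hp hq ⊢
  simp only [Fin.sum_univ_add, Fin.append_left, Fin.append_right, Pi.smul_apply, smul_eq_mul,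
    mul_smul, ← Finset.smul_sum]
  calc _ ≤ dist (s • ∑ i, lam i • z (Fin.castAdd m i)) (s • a)
        + dist (t • ∑ j, mu j • z (Fin.natAdd n j)) (t • b) := dist_add_add_le _ _ _ _
    _ = s * dist (∑ i, lam i • z (Fin.castAdd m i)) a
        + t * dist (∑ j, mu j • z (Fin.natAdd n j)) b := by
      rw [dist_smul₀, dist_smul₀, Real.norm_of_nonneg hs, Real.norm_of_nonneg ht]
    _ ≤ s * ε + t * ε := by gcongr
    _ = ε := by rw [← add_mul, hst, one_mul]

lemma norm_sum_smul_le {n : ℕ} {c : Fin n → ℝ} (hc : ∀ i, 0 ≤ c i) (v : Fin n → Z) :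
    ‖∑ i, c i • v i‖ ≤ ∑ i, c i * ‖v i‖ :=
  (norm_sum_le _ _).trans_eq (by simp only [norm_smul_of_nonneg (hc _)])

lemma isSemiSCSPointOfBall_inv_norm_smul {x : Z} (hx : x ≠ 0)
    (h : ∀ ε > 0, ∃ (n : ℕ) (μ : Fin n → ℝ) (f : Fin n → Z →L[ℝ] ℝ) (δ : Fin n → ℝ),
      (∀ i, 0 ≤ μ i) ∧ ∑ i, μ i ≤ ‖x‖ + ε ∧ (∀ i, 0 < δ i) ∧
      ∀ u : Fin n → Z, (∀ i, u i ∈ ballSlice (f i) (δ i)) → ∑ i, μ i • u i ∈ closedBall x ε) :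
    IsSemiSCSPointOfBall (‖x‖⁻¹ • x) := by
  have ha : 0 < ‖x‖ := norm_pos_iff.2 hx
  refine ⟨(norm_smul_inv_norm hx).le, fun ε hε => ?_⟩
  -- The total weight `T` then satisfies `|T - ‖x‖| ≤ η ≤ ‖x‖ / 2`, so the error `2η / T` is `≤ ε`.
  set η := min (‖x‖ / 2) (ε * ‖x‖ / 4)
  have hη : 0 < η := lt_min (by positivity) (by positivity)
  obtain ⟨n, μ, f, δ, hμ, hμ_le, hδ, hball⟩ := h η hη
  set T := ∑ i, μ i
  choose u₀ hu₀ using fun i => ballSlice_nonempty (f i) (hδ i)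
  have hT_ge : ‖x‖ - η ≤ T := by
    have h₁ := norm_le_of_mem_closedBall (mem_closedBall_comm.1 (hball u₀ hu₀))
    have h₂ : ∑ i, μ i * ‖u₀ i‖ ≤ T :=
      Finset.sum_le_sum fun i _ => mul_le_of_le_one_right (hμ i) (hu₀ i).1
    linarith [norm_sum_smul_le hμ u₀]
  have hT : ‖x‖ / 2 ≤ T := by linarith [min_le_left (‖x‖ / 2) (ε * ‖x‖ / 4)]
  have hT₀ : 0 < T := by linarith
  refine ⟨n, fun i => μ i / T, f, δ, fun i => div_nonneg (hμ i) hT₀.le,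
    by rw [← Finset.sum_div, div_self hT₀.ne'], hδ, fun u hu => ?_⟩
  have hdist := mem_closedBall.1 (hball u hu)
  have hdev : |T⁻¹ - ‖x‖⁻¹| * ‖x‖ = T⁻¹ * |‖x‖ - T| := by
    rw [inv_sub_inv hT₀.ne' ha.ne', abs_div, abs_of_pos (mul_pos hT₀ ha)]
    field_simp
  have hsum : ∑ i, (μ i / T) • u i = T⁻¹ • ∑ i, μ i • u i := by
    simp only [Finset.smul_sum, smul_smul, div_eq_inv_mul]
  rw [mem_closedBall, hsum]
  calc dist (T⁻¹ • ∑ i, μ i • u i) (‖x‖⁻¹ • x)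
      ≤ dist (T⁻¹ • ∑ i, μ i • u i) (T⁻¹ • x) + dist (T⁻¹ • x) (‖x‖⁻¹ • x) := dist_triangle _ _ _
    _ = T⁻¹ * dist (∑ i, μ i • u i) x + T⁻¹ * |‖x‖ - T| := by
      rw [dist_smul₀, dist_eq_norm (T⁻¹ • x), ← sub_smul, norm_smul, Real.norm_eq_abs,
        Real.norm_eq_abs, abs_of_pos (inv_pos.2 hT₀), hdev]
    _ ≤ T⁻¹ * η + T⁻¹ * η := by
      gcongr
      exact abs_sub_le_iff.2 ⟨by linarith, by linarith⟩
    _ ≤ ε := by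
      rw [← mul_add, inv_mul_le_iff₀ hT₀]
      nlinarith [min_le_right (‖x‖ / 2) (ε * ‖x‖ / 4)]

end Slices

section LOne

variable {X Y : Type*} [NormedAddCommGroup X] [NormedSpace ℝ X]
  [NormedAddCommGroup Y] [NormedSpace ℝ Y]

lemma WithLp.fst_sum_smul {n : ℕ} (c : Fin n → ℝ) (w : Fin n → WithLp 1 (X × Y)) :
    (∑ i, c i • w i).fst = ∑ i, c i • (w i).fst := by
  have := map_sum (fstL 1 ℝ X Y) (fun i => c i • w i) Finset.univ
  simp only [fstL_apply, smul_fst] at this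
  exact this

lemma WithLp.snd_sum_smul {n : ℕ} (c : Fin n → ℝ) (w : Fin n → WithLp 1 (X × Y)) :
    (∑ i, c i • w i).snd = ∑ i, c i • (w i).snd := by
  have := map_sum (sndL 1 ℝ X Y) (fun i => c i • w i) Finset.univ
  simp only [sndL_apply, smul_snd] at this
  exact this

lemma opNorm_comp_fstL (f : X →L[ℝ] ℝ) : ‖f.comp (fstL 1 ℝ X Y)‖ = ‖f‖ := by
  refine le_antisymm (ContinuousLinearMap.opNorm_le_bound _ (norm_nonneg f) fun z => ?_)
    (ContinuousLinearMap.opNorm_le_bound _ (norm_nonneg _) fun u => ?_)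
  · exact (f.le_opNorm _).trans (by gcongr; exact WithLp.norm_fst_le X z)
  · simpa using (f.comp (fstL 1 ℝ X Y)).le_opNorm (toLp 1 (u, (0 : Y)))

lemma mem_ballSlice_comp_fstL {f : X →L[ℝ] ℝ} (hf : ‖f‖ = 1) {δ : ℝ} {z : WithLp 1 (X × Y)}
    (hz : z ∈ ballSlice (f.comp (fstL 1 ℝ X Y)) δ) : z.fst ∈ ballSlice f δ ∧ ‖z.snd‖ < δ := by
  obtain ⟨hz₁, hz₂⟩ := hz
  rw [opNorm_comp_fstL] at hz₂
  rw [prod_norm_eq_of_L1] at hz₁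
  have : f z.fst ≤ ‖z.fst‖ := (le_abs_self _).trans (by simpa [hf] using f.le_opNorm z.fst)
  refine ⟨⟨by linarith [norm_nonneg z.snd], hz₂⟩, ?_⟩
  simp only [ContinuousLinearMap.comp_apply, fstL_apply, hf] at hz₂
  linarith

lemma IsSemiSCSPointOfBall.toLp_inl [Nontrivial X] {u : X} (hu : IsSemiSCSPointOfBall u) :
    IsSemiSCSPointOfBall (toLp 1 (u, (0 : Y))) := by
  refine ⟨by simpa using hu.1, fun ε hε => ?_⟩
  obtain ⟨n, lam, f, δ, hlam, hsum, hfδ, hball⟩ := hu.exists_norm_eq_one (half_pos hε)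
  refine ⟨n, lam, fun i => (f i).comp (fstL 1 ℝ X Y), δ, hlam, hsum, fun i => (hfδ i).2.1,
    fun z hz => ?_⟩
  have hz' (i : Fin n) := mem_ballSlice_comp_fstL (hfδ i).1 (hz i)
  have hfst := hball _ fun i => (hz' i).1
  have hsnd : ∑ i, lam i • (z i).snd ∈ closedBall 0 (ε / 2) :=
    (convex_closedBall 0 _).sum_mem (fun i _ => hlam i) hsum fun i _ =>
      mem_closedBall_zero_iff.2 ((hz' i).2.le.trans (hfδ i).2.2)
  rw [mem_closedBall] at hfst hsnd ⊢
  rw [prod_dist_eq_of_L1, fst_sum_smul, snd_sum_smul]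
  simp only [toLp_fst, toLp_snd]
  linarith

noncomputable def WithLp.inlL (p : ENNReal) : X →L[ℝ] WithLp p (X × Y) :=
  (prodContinuousLinearEquiv p ℝ X Y).symm.toContinuousLinearMap.comp
    (ContinuousLinearMap.inl ℝ X Y)

@[simp] lemma WithLp.inlL_apply (p : ENNReal) (u : X) : inlL (Y := Y) p u = toLp p (u, 0) := rfl

lemma apply_toLp_eq_add (F : WithLp 1 (X × Y) →L[ℝ] ℝ) (a : X) (b : Y) :
    F (toLp 1 (a, b)) = F (toLp 1 (a, 0)) + F (toLp 1 (0, b)) := by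
  rw [← map_add, ← toLp_add, Prod.mk_add_mk, add_zero, zero_add]

lemma toLp_norm_smul_mem_ballSlice (F : WithLp 1 (X × Y) →L[ℝ] ℝ) {δ δ' : ℝ} (hδ' : 0 ≤ δ')
    {z : WithLp 1 (X × Y)} (hz : z ∈ ballSlice F δ) {u : X}
    (hu : u ∈ ballSlice (F.comp (inlL 1)) δ') :
    toLp 1 (‖z.fst‖ • u, z.snd) ∈ ballSlice F (δ + δ') := by
  rcases z with ⟨a, b⟩
  obtain ⟨hz₁, hz₂⟩ := hz
  obtain ⟨hu₁, hu₂⟩ := hu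
  simp only [ContinuousLinearMap.comp_apply, inlL_apply] at hu₂
  rw [prod_norm_eq_of_L1] at hz₁
  rw [apply_toLp_eq_add] at hz₂
  have ha : F (toLp 1 (a, 0)) ≤ ‖F.comp (inlL 1)‖ * ‖a‖ :=
    (le_abs_self _).trans ((F.comp (inlL 1)).le_opNorm a)
  have hsmul : F (toLp 1 (‖a‖ • u, 0)) = ‖a‖ * F (toLp 1 (u, 0)) := by
    rw [← smul_eq_mul, ← map_smul, ← toLp_smul, Prod.smul_mk, smul_zero]
  simp only [toLp_fst, toLp_snd] at hz₁ ha hsmul ⊢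
  refine ⟨?_, ?_⟩
  · rw [prod_norm_eq_of_L1, toLp_fst, toLp_snd, norm_smul_of_nonneg (norm_nonneg _)]
    nlinarith [norm_nonneg a]
  · rw [apply_toLp_eq_add, hsmul]
    have ha₁ : 0 ≤ 1 - ‖a‖ := by linarith [norm_nonneg b]
    nlinarith [mul_nonneg (norm_nonneg a) (sub_nonneg.2 hu₂.le), mul_nonneg ha₁ hδ']

lemma IsSemiSCSPointOfBall.exists_sum_smul_fst_mem_closedBall {x : X} {y : Y}
    (h : IsSemiSCSPointOfBall (toLp 1 (x, y))) (hxy : ‖x‖ + ‖y‖ = 1) :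
    ∀ ε > 0, ∃ (n : ℕ) (μ : Fin n → ℝ) (f : Fin n → X →L[ℝ] ℝ) (δ : Fin n → ℝ),
      (∀ i, 0 ≤ μ i) ∧ ∑ i, μ i ≤ ‖x‖ + ε ∧ (∀ i, 0 < δ i) ∧
      ∀ u : Fin n → X, (∀ i, u i ∈ ballSlice (f i) (δ i)) → ∑ i, μ i • u i ∈ closedBall x ε := by
  intro ε hε
  obtain ⟨n, lam, F, δ, hlam, hsum, hδ, hball⟩ := h.2 ε hε
  have hδ₂ (i : Fin n) : 0 < δ i / 2 := half_pos (hδ i)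
  choose z hz using fun i => ballSlice_nonempty (F i) (hδ₂ i)
  choose u₀ hu₀ using fun i => ballSlice_nonempty ((F i).comp (inlL 1)) (hδ₂ i)
  -- Replacing the first coordinate of `z i` by `‖(z i).fst‖ • u i` keeps us in the `i`-th slice.
  have hlift (u : Fin n → X) (hu : ∀ i, u i ∈ ballSlice ((F i).comp (inlL 1)) (δ i / 2)) :
      dist (∑ i, (lam i * ‖(z i).fst‖) • u i) x + dist (∑ i, lam i • (z i).snd) y ≤ ε := by
    have := hball (fun i => toLp 1 (‖(z i).fst‖ • u i, (z i).snd)) fun i => by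
      have := toLp_norm_smul_mem_ballSlice (F i) (hδ₂ i).le (hz i) (hu i)
      rw [add_halves] at this
      exact this
    rw [mem_closedBall, prod_dist_eq_of_L1, fst_sum_smul, snd_sum_smul] at this
    simpa [smul_smul] using this
  refine ⟨n, fun i => lam i * ‖(z i).fst‖, fun i => (F i).comp (inlL 1), fun i => δ i / 2,
    fun i => mul_nonneg (hlam i) (norm_nonneg _), ?_, hδ₂, fun u hu => ?_⟩
  · have hy : ‖y‖ - ε ≤ ∑ i, lam i * ‖(z i).snd‖ := by
      have h₁ := norm_le_of_mem_closedBall (mem_closedBall_comm.1 (mem_closedBall.2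
        ((le_add_of_nonneg_left dist_nonneg).trans (hlift u₀ hu₀))))
      linarith [norm_sum_smul_le hlam fun i => (z i).snd]
    have hz₁ : ∑ i, lam i * (‖(z i).fst‖ + ‖(z i).snd‖) ≤ 1 := by
      refine (Finset.sum_le_sum fun i _ => mul_le_of_le_one_right (hlam i) ?_).trans hsum.le
      rw [← prod_norm_eq_of_L1]
      exact (hz i).1
    simp only [mul_add, Finset.sum_add_distrib] at hz₁
    linarith
  · exact mem_closedBall.2 ((le_add_of_nonneg_right dist_nonneg).trans (hlift u hu))

lemma IsSemiSCSPointOfBall.inv_norm_smul_fst {x : X} {y : Y} (hx : x ≠ 0)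
    (hxy : ‖x‖ + ‖y‖ = 1) (h : IsSemiSCSPointOfBall (toLp 1 (x, y))) :
    IsSemiSCSPointOfBall (‖x‖⁻¹ • x) :=
  isSemiSCSPointOfBall_inv_norm_smul hx (h.exists_sum_smul_fst_mem_closedBall hxy)

end LOne

theorem isSemiSCSPointOfBall_prod_one_iff_general
    {X Y : Type*} [NormedAddCommGroup X] [NormedSpace ℝ X]
    [NormedAddCommGroup Y] [NormedSpace ℝ Y]
    (x : X) (y : Y) (hx : x ≠ 0) (hy : y ≠ 0) (hxy : ‖x‖ + ‖y‖ = 1) :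
    IsSemiSCSPointOfBall ((WithLp.equiv 1 (X × Y)).symm (x, y)) ↔
      IsSemiSCSPointOfBall (‖x‖⁻¹ • x) ∧ IsSemiSCSPointOfBall (‖y‖⁻¹ • y) := by
  rw [equiv_symm_apply]
  have hyx : ‖y‖ + ‖x‖ = 1 := by rwa [add_comm]
  constructor
  · intro h
    refine ⟨h.inv_norm_smul_fst hx hxy, IsSemiSCSPointOfBall.inv_norm_smul_fst hy hyx ?_⟩
    simpa using h.map (LinearIsometryEquiv.withLpProdComm 1 ℝ X Y)
  · rintro ⟨hX, hY⟩
    have : Nontrivial X := nontrivial_of_ne x 0 hx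
    have : Nontrivial Y := nontrivial_of_ne y 0 hy
    have hX' := hX.toLp_inl (Y := Y)
    have hY' := (hY.toLp_inl (Y := X)).map (LinearIsometryEquiv.withLpProdComm 1 ℝ Y X)
    have hdecomp : toLp 1 (x, y) =
        ‖x‖ • toLp 1 (‖x‖⁻¹ • x, (0 : Y)) + ‖y‖ • toLp 1 ((0 : X), ‖y‖⁻¹ • y) := by
      rw [← toLp_smul, ← toLp_smul, ← toLp_add, Prod.smul_mk, Prod.smul_mk, smul_zero, smul_zero,
        smul_inv_smul₀ (norm_ne_zero_iff.2 hx), smul_inv_smul₀ (norm_ne_zero_iff.2 hy),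
        Prod.mk_add_mk, add_zero, zero_add]
    rw [hdecomp]
    exact convex_setOf_isSemiSCSPointOfBall hX' (by simpa using hY') (norm_nonneg x)
      (norm_nonneg y) hxy

/-- For Banach spaces `X`, `Y`, `x ≠ 0`, `y ≠ 0` with `‖x‖ + ‖y‖ = 1`: `(x, y)` is a semi SCS
point of `B_{X ⊕_1 Y}` iff `x/‖x‖` is a semi SCS point of `B_X` and `y/‖y‖` is a semi SCS
point of `B_Y`. -/
theorem isSemiSCSPointOfBall_prod_one_iff
    {X Y : Type*} [NormedAddCommGroup X] [NormedSpace ℝ X] [CompleteSpace X]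
    [NormedAddCommGroup Y] [NormedSpace ℝ Y] [CompleteSpace Y]
    (x : X) (y : Y) (hx : x ≠ 0) (hy : y ≠ 0) (hxy : ‖x‖ + ‖y‖ = 1) :
    IsSemiSCSPointOfBall ((WithLp.equiv 1 (X × Y)).symm (x, y)) ↔
      IsSemiSCSPointOfBall (‖x‖⁻¹ • x) ∧ IsSemiSCSPointOfBall (‖y‖⁻¹ • y) :=
  isSemiSCSPointOfBall_prod_one_iff_general x y hx hy hxy
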